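/- arXiv:2407.18350 — 5 statements merged into one kernel-verified Lean document; each statement's English description precedes it below -/
import Mathlib

section
/- For every integer n ≥ 1, q_1^{(2)}(n) ≥ Q_1^{(2,−)}(n); that is, the number of partitions of n into parts ≥ 2 in which any two parts differ by at least 1 (equivalently, into distinct parts ≥ 2) is at least the number of partitions of n into parts congruent to 2 modulo 4 with no part equal to 2. -/
/-- q_d^{(a)}(n): the number of partitions of n into parts each ≥ a in which
any two parts differ by at least d. -/
def qPart (d a n : ℕ) : ℕ :=
  Fintype.card {p : Nat.Partition n //
    (∀ i ∈ p.parts, a ≤ i) ∧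
    ∀ i ∈ p.parts, p.parts.count i = 1 ∧
      ∀ j ∈ p.parts, j ≠ i → (d : ℤ) ≤ |(i : ℤ) - (j : ℤ)|}

/-- Q_d^{(a)}(n): the number of partitions of n into parts ≡ a or −a (mod d+3). -/
def QPart (d a n : ℕ) : ℕ :=
  Fintype.card {p : Nat.Partition n //
    ∀ i ∈ p.parts, (i : ZMod (d + 3)) = (a : ZMod (d + 3)) ∨
      (i : ZMod (d + 3)) = -(a : ZMod (d + 3))}

/-- Q_d^{(a,−)}(n): the number of partitions of n into parts ≡ a or −a (mod d+3)
with no part equal to d+3−a. -/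
def QPartMinus (d a n : ℕ) : ℕ :=
  Fintype.card {p : Nat.Partition n //
    (∀ i ∈ p.parts, (i : ZMod (d + 3)) = (a : ZMod (d + 3)) ∨
      (i : ZMod (d + 3)) = -(a : ZMod (d + 3))) ∧ (d + 3 - a) ∉ p.parts}

/-!
Parts congruent to 2 modulo 4 are exactly twice the odd numbers, so such partitions of `n`
exist only for even `n = 2m`, and halving embeds them into the partitions of `m` into odd parts.
By Euler's theorem these are as many as the partitions of `m` into distinct parts, and doubling
those gives partitions of `2m` into distinct parts `≥ 2`.
-/

open Finset

namespace Nat.Partition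

def scale {m : ℕ} (k : ℕ) [NeZero k] (p : Partition m) : Partition (k * m) where
  parts := p.parts.map (k * ·)
  parts_pos hki := by
    obtain ⟨i, hi, rfl⟩ := Multiset.mem_map.mp hki
    exact Nat.mul_pos (Nat.pos_of_neZero k) (p.parts_pos hi)
  parts_sum := by rw [Multiset.sum_map_mul_left, Multiset.map_id', p.parts_sum]

theorem scale_injective {k m : ℕ} [NeZero k] :
    Function.Injective (scale k : Partition m → Partition (k * m)) :=
  fun _ _ h => Nat.Partition.ext <|
    Multiset.map_injective (mul_right_injective₀ (NeZero.ne k)) (congrArg parts h)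

theorem exists_scale_eq_of_dvd {k m : ℕ} [NeZero k] (p : Partition (k * m))
    (h : ∀ i ∈ p.parts, k ∣ i) :
    ∃ q : Partition m, scale k q = p := by
  have hcancel : p.parts.map (fun i => k * (i / k)) = p.parts :=
    (Multiset.map_congr rfl fun i hi => Nat.mul_div_cancel' (h i hi)).trans (Multiset.map_id _)
  refine ⟨⟨p.parts.map (· / k), fun hik => ?_, ?_⟩, Nat.Partition.ext ?_⟩
  · obtain ⟨i, hi, rfl⟩ := Multiset.mem_map.mp hik
    exact Nat.div_pos (Nat.le_of_dvd (p.parts_pos hi) (h i hi)) (Nat.pos_of_neZero k)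
  · refine Nat.eq_of_mul_eq_mul_left (Nat.pos_of_neZero k) ?_
    rw [← Multiset.sum_map_mul_left, hcancel, p.parts_sum]
  · exact (Multiset.map_map _ _ _).trans hcancel

end Nat.Partition

open Nat.Partition

theorem exists_odd_eq_two_mul_of_natCast_eq {i : ℕ}
    (h : (i : ZMod 4) = 2 ∨ (i : ZMod 4) = -2) : ∃ j, Odd j ∧ i = 2 * j := by
  have h2 : (i : ZMod 4) = (2 : ℕ) := by
    rcases h with h | h
    · exact_mod_cast h
    · rw [h]; decide
  rw [ZMod.natCast_eq_natCast_iff'] at h2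
  exact ⟨i / 2, Nat.odd_iff.mpr (by omega), by omega⟩

theorem exists_odd_eq_two_mul_of_QPartMinus {n : ℕ} {p : Nat.Partition n}
    (hp : ∀ i ∈ p.parts, (i : ZMod (1 + 3)) = ((2 : ℕ) : ZMod (1 + 3)) ∨
      (i : ZMod (1 + 3)) = -((2 : ℕ) : ZMod (1 + 3))) {i : ℕ} (hi : i ∈ p.parts) :
    ∃ j, Odd j ∧ i = 2 * j :=
  exists_odd_eq_two_mul_of_natCast_eq (by simpa using hp i hi)

theorem QPartMinus_one_two_le_card_odds (m : ℕ) : QPartMinus 1 2 (2 * m) ≤ #(odds m) := by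
  rw [QPartMinus, Fintype.card_subtype]
  calc _ ≤ #((odds m).image (scale 2)) := card_le_card fun p hp => ?_
    _ ≤ #(odds m) := card_image_le
  have hodd : ∀ i ∈ p.parts, ∃ j, Odd j ∧ i = 2 * j := fun i hi =>
    exists_odd_eq_two_mul_of_QPartMinus (mem_filter.mp hp).2.1 hi
  obtain ⟨q, rfl⟩ := exists_scale_eq_of_dvd p fun i hi => by
    obtain ⟨j, -, rfl⟩ := hodd i hi
    exact dvd_mul_right 2 j
  refine mem_image_of_mem _ (mem_filter.mpr ⟨mem_univ q, fun i hi => ?_⟩)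
  obtain ⟨j, hj, hij⟩ := hodd (2 * i) (Multiset.mem_map_of_mem _ hi)
  rw [Nat.mul_left_cancel two_pos hij]
  exact Nat.not_even_iff_odd.mpr hj

theorem card_distincts_le_qPart_one_two (m : ℕ) : #(distincts m) ≤ qPart 1 2 (2 * m) := by
  rw [qPart, Fintype.card_subtype]
  refine card_le_card_of_injOn (scale 2) (fun q hq => ?_) scale_injective.injOn
  have hnodup : (scale 2 q).parts.Nodup :=
    (mem_filter.mp hq).2.map (mul_right_injective₀ two_ne_zero)
  refine mem_filter.mpr ⟨mem_univ _, fun i hi => ?_, fun i hi =>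
    ⟨Multiset.count_eq_one_of_mem hnodup hi, fun j _ hji => ?_⟩⟩
  · obtain ⟨a, ha, rfl⟩ := Multiset.mem_map.mp hi
    have := q.parts_pos ha
    omega
  · rw [Nat.cast_one]
    exact Int.one_le_abs (sub_ne_zero.mpr (by omega))

theorem QPartMinus_one_two_odd_eq_zero (m : ℕ) : QPartMinus 1 2 (2 * m + 1) = 0 := by
  refine Fintype.card_eq_zero_iff.mpr ⟨fun p => ?_⟩
  have : 2 ∣ 2 * m + 1 := p.1.parts_sum ▸ Multiset.dvd_sum fun i hi => by
    obtain ⟨j, -, rfl⟩ := exists_odd_eq_two_mul_of_QPartMinus p.2.1 hi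
    exact dvd_mul_right 2 j
  omega

theorem kang_park_d_one_general (n : ℕ) :
    QPartMinus 1 2 n ≤ qPart 1 2 n := by
  obtain ⟨m, rfl | rfl⟩ := Nat.even_or_odd' n
  · calc QPartMinus 1 2 (2 * m) ≤ #(odds m) := QPartMinus_one_two_le_card_odds m
      _ = #(distincts m) := card_odds_eq_card_distincts m
      _ ≤ qPart 1 2 (2 * m) := card_distincts_le_qPart_one_two m
  · rw [QPartMinus_one_two_odd_eq_zero]
    exact Nat.zero_le _

/-- For every n ≥ 1, q_1^{(2)}(n) ≥ Q_1^{(2,−)}(n). -/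
theorem kang_park_d_one (n : ℕ) (hn : 1 ≤ n) :
    QPartMinus 1 2 n ≤ qPart 1 2 n :=
  kang_park_d_one_general n
end

section
/- For every odd integer d with 7 ≤ d ≤ 61 and every n ∈ {d+1, d+3, d+5}, q_d^{(2)}(n) < Q_d^{(2)}(n); that is, the difference q_d^{(2)}(n) − Q_d^{(2)}(n) is negative exactly at these three values of n. -/
namespace DeltaNegAux

/-- Classification of the partitions counted by `qPart d 2 n` for the three relevant `n`. -/
lemma classify (d n : ℕ) (hd : 7 ≤ d)
    (hn : n = d + 1 ∨ n = d + 3 ∨ n = d + 5)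
    (s : Multiset ℕ) (hsum : s.sum = n)
    (h2 : ∀ i ∈ s, 2 ≤ i)
    (hc : ∀ i ∈ s, s.count i = 1 ∧
      ∀ j ∈ s, j ≠ i → (d : ℤ) ≤ |(i : ℤ) - (j : ℤ)|) :
    s = {n} ∨ (n = d + 5 ∧ s = {2, d + 3}) := by
  have hn1 : d + 1 ≤ n := by omega
  have hn2 : n ≤ d + 5 := by omega
  have hs0 : s ≠ 0 := by
    intro h; subst h; simp at hsum; omega
  obtain ⟨a, ha⟩ := Multiset.exists_mem_of_ne_zero hs0
  have hse : s = a ::ₘ s.erase a := (Multiset.cons_erase ha).symm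
  have hcount : s.count a = 1 := (hc a ha).1
  have hanotin : a ∉ s.erase a := by
    intro hmem
    have h1 : 0 < (s.erase a).count a := Multiset.count_pos.mpr hmem
    have h2' : (s.erase a).count a = s.count a - 1 := Multiset.count_erase_self a s
    omega
  by_cases ht : s.erase a = 0
  · left
    have hsa : s = {a} := by rw [hse, ht]; rfl
    rw [hsa] at hsum
    simp at hsum
    rw [hsa, hsum]
  · obtain ⟨b, hb⟩ := Multiset.exists_mem_of_ne_zero ht
    have hbs : b ∈ s := Multiset.mem_of_mem_erase hb
    have hba : b ≠ a := fun h => hanotin (h ▸ hb)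
    have hgap : (d : ℤ) ≤ |(a : ℤ) - (b : ℤ)| := (hc a ha).2 b hbs hba
    have ha2 : 2 ≤ a := h2 a ha
    have hb2 : 2 ≤ b := h2 b hbs
    have hte : s.erase a = b ::ₘ (s.erase a).erase b := (Multiset.cons_erase hb).symm
    have hsumab : a + b + ((s.erase a).erase b).sum = n := by
      rw [← hsum, hse, hte]; simp [Multiset.sum_cons]; ring
    have habs : (d : ℤ) ≤ (a : ℤ) - b ∨ (d : ℤ) ≤ (b : ℤ) - a := by
      rcases le_abs.mp hgap with h | h
      · left; exact h
      · right; omega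
    by_cases ht2 : (s.erase a).erase b = 0
    · -- two parts: a + b = n
      have hab : a + b = n := by rw [ht2] at hsumab; simpa using hsumab
      have key : n = d + 5 ∧ ((a = 2 ∧ b = d + 3) ∨ (a = d + 3 ∧ b = 2)) := by
        rcases habs with h | h <;> rcases hn with rfl | rfl | rfl <;>
          constructor <;> omega
      right
      refine ⟨key.1, ?_⟩
      have hs2 : s = a ::ₘ b ::ₘ 0 := by rw [hse, hte, ht2]
      rcases key.2 with ⟨h1, h2'⟩ | ⟨h1, h2'⟩
      · rw [hs2, h1, h2']; rfl
      · rw [hs2, h1, h2', Multiset.cons_swap]; rfl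
    · -- three parts: contradiction
      obtain ⟨c, hcmem⟩ := Multiset.exists_mem_of_ne_zero ht2
      have hcs : c ∈ s := Multiset.mem_of_mem_erase (Multiset.mem_of_mem_erase hcmem)
      have hc2 : 2 ≤ c := h2 c hcs
      have hcle : c ≤ ((s.erase a).erase b).sum :=
        Multiset.single_le_sum (fun x _ => Nat.zero_le x) c hcmem
      rcases habs with h | h <;> omega

lemma zmod_dplus1 (d : ℕ) : ((d + 1 : ℕ) : ZMod (d + 3)) = -((2 : ℕ) : ZMod (d + 3)) := by
  have h : ((d + 3 : ℕ) : ZMod (d + 3)) = 0 := ZMod.natCast_self _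
  push_cast at h ⊢
  linear_combination h

lemma zmod_dplus5 (d : ℕ) : ((d + 5 : ℕ) : ZMod (d + 3)) = ((2 : ℕ) : ZMod (d + 3)) := by
  have h : ((d + 3 : ℕ) : ZMod (d + 3)) = 0 := ZMod.natCast_self _
  push_cast at h ⊢
  linear_combination h

end DeltaNegAux

open DeltaNegAux in
/-- For every odd d with 7 ≤ d ≤ 61 and every n ∈ {d+1, d+3, d+5},
q_d^{(2)}(n) < Q_d^{(2)}(n). -/
theorem delta_neg_odd (d n : ℕ) (hd : Odd d) (hd7 : 7 ≤ d) (hd61 : d ≤ 61)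
    (hn : n = d + 1 ∨ n = d + 3 ∨ n = d + 5) :
    qPart d 2 n < QPart d 2 n := by
  obtain ⟨m, hm⟩ := hd
  have hm3 : 3 ≤ m := by omega
  rcases hn with rfl | rfl | rfl
  · -- n = d + 1
    have hq : qPart d 2 (d + 1) ≤ 1 := by
      rw [qPart]
      refine Fintype.card_le_one_iff.mpr ?_
      rintro ⟨p, hp2, hpc⟩ ⟨q, hq2, hqc⟩
      have cp := classify d (d + 1) hd7 (by omega) p.parts p.parts_sum hp2 hpc
      have cq := classify d (d + 1) hd7 (by omega) q.parts q.parts_sum hq2 hqc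
      have hp' : p.parts = {d + 1} := by
        rcases cp with h | ⟨h, _⟩
        · exact h
        · omega
      have hq' : q.parts = {d + 1} := by
        rcases cq with h | ⟨h, _⟩
        · exact h
        · omega
      exact Subtype.ext (Nat.Partition.ext (hp'.trans hq'.symm))
    have hQ : 1 < QPart d 2 (d + 1) := by
      rw [QPart, Fintype.one_lt_card_iff]
      refine ⟨⟨⟨{d + 1}, ?_, ?_⟩, ?_⟩, ⟨⟨Multiset.replicate (m + 1) 2, ?_, ?_⟩, ?_⟩, ?_⟩
      · intro i hi; simp at hi; omega
      · simp
      · intro i hi; simp at hi; subst hi; right; exact zmod_dplus1 d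
      · intro i hi; rw [Multiset.eq_of_mem_replicate hi]; omega
      · rw [Multiset.sum_replicate, smul_eq_mul]; omega
      · intro i hi; rw [Multiset.eq_of_mem_replicate hi]; left; rfl
      · intro h
        rw [Subtype.mk.injEq] at h
        have h2 := congrArg (fun p => Multiset.card p.parts) h
        simp only [Multiset.card_singleton, Multiset.card_replicate] at h2
        omega
    omega
  · -- n = d + 3
    have hq : qPart d 2 (d + 3) ≤ 1 := by
      rw [qPart]
      refine Fintype.card_le_one_iff.mpr ?_
      rintro ⟨p, hp2, hpc⟩ ⟨q, hq2, hqc⟩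
      have cp := classify d (d + 3) hd7 (by omega) p.parts p.parts_sum hp2 hpc
      have cq := classify d (d + 3) hd7 (by omega) q.parts q.parts_sum hq2 hqc
      have hp' : p.parts = {d + 3} := by
        rcases cp with h | ⟨h, _⟩
        · exact h
        · omega
      have hq' : q.parts = {d + 3} := by
        rcases cq with h | ⟨h, _⟩
        · exact h
        · omega
      exact Subtype.ext (Nat.Partition.ext (hp'.trans hq'.symm))
    have hQ : 1 < QPart d 2 (d + 3) := by
      rw [QPart, Fintype.one_lt_card_iff]
      refine ⟨⟨⟨{d + 1, 2}, ?_, ?_⟩, ?_⟩, ⟨⟨Multiset.replicate (m + 2) 2, ?_, ?_⟩, ?_⟩, ?_⟩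
      · intro i hi; simp at hi; rcases hi with h | h <;> omega
      · simp only [Multiset.insert_eq_cons, Multiset.sum_cons, Multiset.sum_singleton]
      · intro i hi
        simp at hi
        rcases hi with h | h
        · subst h; right; exact zmod_dplus1 d
        · subst h; left; rfl
      · intro i hi; rw [Multiset.eq_of_mem_replicate hi]; omega
      · rw [Multiset.sum_replicate, smul_eq_mul]; omega
      · intro i hi; rw [Multiset.eq_of_mem_replicate hi]; left; rfl
      · intro h
        rw [Subtype.mk.injEq] at h
        have h2 := congrArg (fun p => Multiset.card p.parts) h
        simp only [Multiset.insert_eq_cons, Multiset.card_cons, Multiset.card_singleton,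
          Multiset.card_replicate] at h2
        omega
    omega
  · -- n = d + 5
    have hq : qPart d 2 (d + 5) ≤ 2 := by
      rw [qPart]
      have hcb : Fintype.card Bool = 2 := by simp
      rw [← hcb]
      apply Fintype.card_le_of_injective (fun x => decide (x.1.parts = {d + 5}))
      rintro ⟨p, hp2, hpc⟩ ⟨q, hq2, hqc⟩ hf
      simp only [decide_eq_decide] at hf
      have cp := classify d (d + 5) hd7 (by omega) p.parts p.parts_sum hp2 hpc
      have cq := classify d (d + 5) hd7 (by omega) q.parts q.parts_sum hq2 hqc
      have hne : ({2, d + 3} : Multiset ℕ) ≠ {d + 5} := by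
        intro h
        have h2 := congrArg Multiset.card h
        simp only [Multiset.insert_eq_cons, Multiset.card_cons, Multiset.card_singleton] at h2
        omega
      refine Subtype.ext (Nat.Partition.ext ?_)
      rcases cp with hp' | ⟨_, hp'⟩ <;> rcases cq with hq' | ⟨_, hq'⟩
      · exact hp'.trans hq'.symm
      · exact absurd ((hf.mp hp').symm.trans hq') (fun h => hne h.symm)
      · exact absurd ((hf.mpr hq').symm.trans hp') (fun h => hne h.symm)
      · exact hp'.trans hq'.symm
    have hQ : 2 < QPart d 2 (d + 5) := by
      rw [QPart, Fintype.two_lt_card_iff]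
      refine ⟨⟨⟨{d + 5}, ?_, ?_⟩, ?_⟩, ⟨⟨{d + 1, 2, 2}, ?_, ?_⟩, ?_⟩,
        ⟨⟨Multiset.replicate (m + 3) 2, ?_, ?_⟩, ?_⟩, ?_, ?_, ?_⟩
      · intro i hi; simp at hi; omega
      · simp
      · intro i hi; simp at hi; subst hi; left; exact zmod_dplus5 d
      · intro i hi; simp at hi; rcases hi with h | h | h <;> omega
      · simp only [Multiset.insert_eq_cons, Multiset.sum_cons, Multiset.sum_singleton]; omega
      · intro i hi
        simp at hi
        rcases hi with h | h
        · subst h; right; exact zmod_dplus1 d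
        · subst h; left; rfl
      · intro i hi; rw [Multiset.eq_of_mem_replicate hi]; omega
      · rw [Multiset.sum_replicate, smul_eq_mul]; omega
      · intro i hi; rw [Multiset.eq_of_mem_replicate hi]; left; rfl
      · intro h
        rw [Subtype.mk.injEq] at h
        have h2 := congrArg (fun p => Multiset.card p.parts) h
        simp only [Multiset.insert_eq_cons, Multiset.card_cons, Multiset.card_singleton] at h2
        omega
      · intro h
        rw [Subtype.mk.injEq] at h
        have h2 := congrArg (fun p => Multiset.card p.parts) h
        simp only [Multiset.insert_eq_cons, Multiset.card_cons, Multiset.card_singleton,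
          Multiset.card_replicate] at h2
        omega
      · intro h
        rw [Subtype.mk.injEq] at h
        have h2 := congrArg (fun p => Multiset.card p.parts) h
        simp only [Multiset.insert_eq_cons, Multiset.card_cons, Multiset.card_singleton,
          Multiset.card_replicate] at h2
        omega
    omega
end

section
/- Let d ≥ 4 be an integer and let x, y be real numbers with y > 0. Then −y · (Re(g_d(y + 2πi x)) − g_d(y)) = T1(x,y) + T2(x,y) + T3(x,y), and moreover T1(x,y) ≥ 0, T2(x,y) ≥ 0, and T3(x,y) ≥ 0. -/
/-!
Put `z = e^{-τ}`. Summing the two residue classes `±2 mod d+3` as geometric series gives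
`g_d(τ) = (z² + z^{d+1}) / (1 - z^{d+3})`. For `τ = y + 2πix` write `z = ζ / E` with `E = e^y` and
`|ζ| = 1`; since `2 + (d+1) = d+3`, multiplying by the conjugate of the denominator turns the
numerator into a combination of `ζ^2, ζ^{d+1}` and their conjugates only, so the real part is a
quotient that is linear in `cos 4πx`, `cos 2π(d+1)x`, `cos 2π(d+3)x`. The decomposition is then a
polynomial identity in `E` and these three cosines. Each `T_i` is `(1 - cos) · (numerator) / D`,
with `D > 0`, and the numerators of `T1`, `T2` are of the form `E^c (E^u - 1)(E^v - 1)`.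
-/

open Real Complex

/-- g_d(τ) = Σ e^{−nτ}, summed over integers n ≥ 0 with n ≡ ±2 (mod d+3). -/
noncomputable def gFun (d : ℕ) (τ : ℂ) : ℂ :=
  ∑' n : ℕ, if (n : ZMod (d + 3)) = 2 ∨ (n : ZMod (d + 3)) = -2 then
    Complex.exp (-(n : ℂ) * τ) else 0

/-- The common denominator D(x,y). -/
noncomputable def Dden (d : ℕ) (x y : ℝ) : ℝ :=
  ((Real.exp (((d : ℝ) + 3) * y) - 1) / y) *
    (Real.exp (2 * ((d : ℝ) + 3) * y) -
      2 * Real.exp (((d : ℝ) + 3) * y) * Real.cos (2 * π * ((d : ℝ) + 3) * x) + 1)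

noncomputable def T1 (d : ℕ) (x y : ℝ) : ℝ :=
  (1 - Real.cos (4 * π * x)) *
    (Real.exp ((3 * (d : ℝ) + 7) * y) + Real.exp (2 * y) -
      Real.exp ((2 * (d : ℝ) + 4) * y) - Real.exp (((d : ℝ) + 5) * y)) / Dden d x y

noncomputable def T2 (d : ℕ) (x y : ℝ) : ℝ :=
  (1 - Real.cos (2 * π * ((d : ℝ) + 1) * x)) *
    (Real.exp ((2 * (d : ℝ) + 8) * y) + Real.exp (((d : ℝ) + 1) * y) -
      Real.exp ((2 * (d : ℝ) + 4) * y) - Real.exp (((d : ℝ) + 5) * y)) / Dden d x y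

noncomputable def T3 (d : ℕ) (x y : ℝ) : ℝ :=
  2 * (1 - Real.cos (2 * π * ((d : ℝ) + 3) * x)) *
    (Real.exp ((2 * (d : ℝ) + 4) * y) + Real.exp (((d : ℝ) + 5) * y)) / Dden d x y

theorem hasSum_geometric_ite_natCast_eq {K : Type*} [NormedDivisionRing K] {m : ℕ} [NeZero m]
    (r : ZMod m) {z : K} (hz : ‖z‖ < 1) :
    HasSum (fun n : ℕ ↦ if (n : ZMod m) = r then z ^ n else 0) (z ^ r.val * (1 - z ^ m)⁻¹) := by
  have hinj : Function.Injective (fun k : ℕ ↦ m * k + r.val) := fun k l h ↦ by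
    simpa [NeZero.ne m] using h
  rw [← hinj.hasSum_iff]
  · have hzm : ‖z ^ m‖ < 1 := by
      simpa [norm_pow] using pow_lt_one₀ (norm_nonneg z) hz (NeZero.ne m)
    refine ((hasSum_geometric_of_norm_lt_one hzm).mul_left (z ^ r.val)).congr_fun fun k ↦ ?_
    have hres : ((m * k + r.val : ℕ) : ZMod m) = r := by simp
    rw [Function.comp_apply, if_pos hres, ← pow_mul, ← pow_add, add_comm]
  · intro n hn
    split_ifs with h
    · exact absurd ⟨n / m, by simp [← h, ZMod.val_natCast, Nat.div_add_mod]⟩ hn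
    · rfl

theorem gFun_eq_div {d : ℕ} (hd : d ≠ 1) {τ : ℂ} (hτ : 0 < τ.re) :
    gFun d τ = (cexp (-τ) ^ 2 + cexp (-τ) ^ (d + 1)) / (1 - cexp (-τ) ^ (d + 3)) := by
  have hz : ‖cexp (-τ)‖ < 1 := by simpa [Complex.norm_exp] using hτ
  have hval_two : (2 : ZMod (d + 3)).val = 2 := ZMod.val_ofNat_of_lt (by norm_num)
  have hval_neg_two : (-2 : ZMod (d + 3)).val = d + 1 := by
    rw [ZMod.neg_val, if_neg (fun h ↦ by simp [h] at hval_two), hval_two]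
    omega
  have hne : (2 : ZMod (d + 3)) ≠ -2 := fun h ↦ hd (by have := congrArg ZMod.val h; omega)
  have hsum := (hasSum_geometric_ite_natCast_eq (2 : ZMod (d + 3)) hz).add
    (hasSum_geometric_ite_natCast_eq (-2 : ZMod (d + 3)) hz)
  rw [hval_two, hval_neg_two, ← add_mul, ← div_eq_mul_inv] at hsum
  refine (hsum.congr_fun fun n ↦ ?_).tsum_eq
  rw [← Complex.exp_nat_mul, neg_mul, mul_neg]
  by_cases h : (n : ZMod (d + 3)) = 2
  · simp [h, hne]
  · simp [h]

theorem re_pow_add_pow_div_one_sub_pow {ζ : ℂ} (hζ : ‖ζ‖ = 1) {E : ℝ} (hE : E ≠ 0) (a b : ℕ) :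
    (((ζ / E) ^ a + (ζ / E) ^ b) / (1 - (ζ / E) ^ (a + b))).re =
      ((ζ ^ a).re * (E ^ (a + 2 * b) - E ^ a) + (ζ ^ b).re * (E ^ (2 * a + b) - E ^ b)) /
        ((E ^ (a + b)) ^ 2 - 2 * E ^ (a + b) * (ζ ^ (a + b)).re + 1) := by
  have hE' : (E : ℂ) ≠ 0 := by exact_mod_cast hE
  have hcleared : ((ζ / E) ^ a + (ζ / E) ^ b) / (1 - (ζ / E) ^ (a + b)) =
      (ζ ^ a * E ^ b + ζ ^ b * E ^ a) / (E ^ (a + b) - ζ ^ (a + b)) := by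
    rw [← mul_div_mul_right _ _ (pow_ne_zero (a + b) hE')]
    congr 1 <;> simp only [div_pow] <;> field_simp
    ring
  have hunit : ∀ k : ℕ, ζ ^ k * (starRingEnd ℂ) ζ ^ k = 1 := fun k ↦ by
    rw [← mul_pow, Complex.mul_conj, Complex.normSq_eq_norm_sq, hζ]; simp
  have hnum : (ζ ^ a * E ^ b + ζ ^ b * E ^ a) * (starRingEnd ℂ) (E ^ (a + b) - ζ ^ (a + b)) =
      ζ ^ a * E ^ (a + 2 * b) + ζ ^ b * E ^ (2 * a + b) - (starRingEnd ℂ) ζ ^ b * E ^ b -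
        (starRingEnd ℂ) ζ ^ a * E ^ a := by
    simp only [map_sub, map_pow, Complex.conj_ofReal]
    linear_combination -((starRingEnd ℂ) ζ ^ b * E ^ b) * hunit a -
      ((starRingEnd ℂ) ζ ^ a * E ^ a) * hunit b
  have hden : Complex.normSq (E ^ (a + b) - ζ ^ (a + b)) =
      (E ^ (a + b)) ^ 2 - 2 * E ^ (a + b) * (ζ ^ (a + b)).re + 1 := by
    rw [Complex.normSq_sub, ← Complex.ofReal_pow, Complex.normSq_ofReal, map_pow,
      Complex.normSq_eq_norm_sq, hζ, Complex.re_ofReal_mul, Complex.conj_re]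
    ring
  rw [hcleared, div_eq_mul_inv, Complex.inv_def, ← mul_assoc, Complex.re_mul_ofReal, hnum, hden,
    ← div_eq_mul_inv]
  congr 1
  simp only [← Complex.ofReal_pow, Complex.sub_re, Complex.add_re, Complex.re_mul_ofReal,
    ← map_pow, Complex.conj_re]
  ring

theorem gFun_re {d : ℕ} (hd : d ≠ 1) (x : ℝ) {y : ℝ} (hy : 0 < y) :
    (gFun d ((y : ℂ) + 2 * (π : ℂ) * (x : ℂ) * Complex.I)).re =
      (Real.cos (4 * π * x) * (rexp y ^ (2 * d + 4) - rexp y ^ 2) +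
          Real.cos (2 * π * ((d : ℝ) + 1) * x) * (rexp y ^ (d + 5) - rexp y ^ (d + 1))) /
        ((rexp y ^ (d + 3)) ^ 2 - 2 * rexp y ^ (d + 3) * Real.cos (2 * π * ((d : ℝ) + 3) * x) +
          1) := by
  set ζ := cexp (↑(-(2 * π * x)) * Complex.I)
  have hζ : ‖ζ‖ = 1 := Complex.norm_exp_ofReal_mul_I _
  have hz : cexp (-((y : ℂ) + 2 * (π : ℂ) * (x : ℂ) * Complex.I)) = ζ / rexp y := by
    rw [Complex.ofReal_exp, ← Complex.exp_sub]
    push_cast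
    ring_nf
  have hre : ∀ k : ℕ, (ζ ^ k).re = Real.cos (2 * π * k * x) := fun k ↦ by
    rw [← Complex.exp_nat_mul, ← mul_assoc, ← Complex.ofReal_natCast, ← Complex.ofReal_mul,
      Complex.exp_ofReal_mul_I_re, mul_neg, Real.cos_neg]
    ring_nf
  rw [gFun_eq_div hd (by simpa using hy), hz, show d + 3 = 2 + (d + 1) by omega,
    re_pow_add_pow_div_one_sub_pow hζ (Real.exp_pos y).ne', hre, hre, hre]
  push_cast
  ring_nf

section PowForms

variable (d : ℕ) (x y : ℝ)

theorem Dden_eq_pow : Dden d x y = (rexp y ^ (d + 3) - 1) / y *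
    ((rexp y ^ (d + 3)) ^ 2 - 2 * rexp y ^ (d + 3) * Real.cos (2 * π * ((d : ℝ) + 3) * x) + 1) := by
  simp only [Dden, ← Real.exp_nat_mul]
  push_cast
  ring_nf

theorem T1_eq_pow : T1 d x y = (1 - Real.cos (4 * π * x)) *
    (rexp y ^ (3 * d + 7) + rexp y ^ 2 - rexp y ^ (2 * d + 4) - rexp y ^ (d + 5)) / Dden d x y := by
  simp only [T1, ← Real.exp_nat_mul]
  push_cast
  rfl

theorem T2_eq_pow : T2 d x y = (1 - Real.cos (2 * π * ((d : ℝ) + 1) * x)) *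
    (rexp y ^ (2 * d + 8) + rexp y ^ (d + 1) - rexp y ^ (2 * d + 4) - rexp y ^ (d + 5)) /
      Dden d x y := by
  simp only [T2, ← Real.exp_nat_mul]
  push_cast
  rfl

theorem T3_eq_pow : T3 d x y = 2 * (1 - Real.cos (2 * π * ((d : ℝ) + 3) * x)) *
    (rexp y ^ (2 * d + 4) + rexp y ^ (d + 5)) / Dden d x y := by
  simp only [T3, ← Real.exp_nat_mul]
  push_cast
  rfl

end PowForms

theorem sq_sub_two_mul_mul_cos_add_one_pos {t : ℝ} (ht : 1 < t) (θ : ℝ) :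
    0 < t ^ 2 - 2 * t * Real.cos θ + 1 := by
  have hsplit : t ^ 2 - 2 * t * Real.cos θ + 1 = (t - 1) ^ 2 + 2 * t * (1 - Real.cos θ) := by ring
  rw [hsplit]
  exact add_pos_of_pos_of_nonneg (pow_pos (sub_pos.2 ht) 2)
    (mul_nonneg (by linarith) (sub_nonneg.2 (Real.cos_le_one θ)))

theorem pow_add_add_pow_add_le {R : Type*} [CommRing R] [PartialOrder R] [IsOrderedRing R]
    {E : R} (hE : 1 ≤ E) (c u v : ℕ) :
    E ^ (c + u) + E ^ (c + v) ≤ E ^ (c + u + v) + E ^ c := by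
  have hfactor : E ^ (c + u + v) + E ^ c - (E ^ (c + u) + E ^ (c + v)) =
      E ^ c * ((E ^ u - 1) * (E ^ v - 1)) := by ring
  refine sub_nonneg.1 (hfactor ▸ mul_nonneg (pow_nonneg ?_ c) (mul_nonneg ?_ ?_))
  · exact zero_le_one.trans hE
  · exact sub_nonneg.2 (one_le_pow₀ hE)
  · exact sub_nonneg.2 (one_le_pow₀ hE)

section Decomposition

variable (d : ℕ) (x : ℝ) {y : ℝ}

theorem Dden_pos (hy : 0 < y) : 0 < Dden d x y := by
  have hE : 1 < rexp y ^ (d + 3) := one_lt_pow₀ (Real.one_lt_exp_iff.2 hy) (by omega)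
  rw [Dden_eq_pow]
  exact mul_pos (div_pos (sub_pos.2 hE) hy) (sq_sub_two_mul_mul_cos_add_one_pos hE _)

theorem T1_nonneg (hy : 0 < y) : 0 ≤ T1 d x y := by
  have h := pow_add_add_pow_add_le (Real.one_le_exp hy.le) 2 (2 * d + 2) (d + 3)
  rw [T1_eq_pow]
  refine div_nonneg (mul_nonneg (sub_nonneg.2 (Real.cos_le_one _)) ?_) (Dden_pos d x hy).le
  ring_nf at h ⊢
  linarith

theorem T2_nonneg (hy : 0 < y) : 0 ≤ T2 d x y := by
  have h := pow_add_add_pow_add_le (Real.one_le_exp hy.le) (d + 1) (d + 3) 4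
  rw [T2_eq_pow]
  refine div_nonneg (mul_nonneg (sub_nonneg.2 (Real.cos_le_one _)) ?_) (Dden_pos d x hy).le
  ring_nf at h ⊢
  linarith

theorem T3_nonneg (hy : 0 < y) : 0 ≤ T3 d x y := by
  have hcos := Real.cos_le_one (2 * π * ((d : ℝ) + 3) * x)
  refine div_nonneg (mul_nonneg (mul_nonneg zero_le_two (sub_nonneg.2 hcos)) ?_)
    (Dden_pos d x hy).le
  positivity

theorem neg_mul_gFun_re_sub_eq_T_sum (hd : d ≠ 1) (hy : 0 < y) :
    -y * ((gFun d ((y : ℂ) + 2 * (π : ℂ) * (x : ℂ) * Complex.I)).re - (gFun d (y : ℂ)).re) =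
      T1 d x y + T2 d x y + T3 d x y := by
  have hE : 1 < rexp y ^ (d + 3) := one_lt_pow₀ (Real.one_lt_exp_iff.2 hy) (by omega)
  have hE₁ : rexp y ^ (d + 3) - 1 ≠ 0 := (sub_pos.2 hE).ne'
  have hB := (sq_sub_two_mul_mul_cos_add_one_pos hE (2 * π * ((d : ℝ) + 3) * x)).ne'
  have hreal : (gFun d (y : ℂ)).re = (rexp y ^ (d + 1) + rexp y ^ 2) / (rexp y ^ (d + 3) - 1) := by
    have hB₀ := (sq_sub_two_mul_mul_cos_add_one_pos hE 0).ne'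
    rw [show (y : ℂ) = y + 2 * π * ((0 : ℝ) : ℂ) * Complex.I by simp, gFun_re hd 0 hy]
    simp only [mul_zero, Real.cos_zero, mul_one, one_mul] at hB₀ ⊢
    rw [div_eq_div_iff hB₀ hE₁]
    ring
  rw [T1_eq_pow, T2_eq_pow, T3_eq_pow, ← add_div, ← add_div, eq_div_iff (Dden_pos d x hy).ne',
    gFun_re hd x hy, hreal, Dden_eq_pow]
  generalize Real.cos (4 * π * x) = c₂
  generalize Real.cos (2 * π * ((d : ℝ) + 1) * x) = c₁
  generalize Real.cos (2 * π * ((d : ℝ) + 3) * x) = c₃ at hB ⊢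
  generalize hBdef : (rexp y ^ (d + 3)) ^ 2 - 2 * rexp y ^ (d + 3) * c₃ + 1 = B at hB ⊢
  field_simp
  rw [← hBdef]
  ring

end Decomposition

/-- For d ≥ 4 and real x, y with y > 0, we have
−y(Re(g_d(y + 2πix)) − g_d(y)) = T1 + T2 + T3, with each Ti nonnegative. -/
theorem T_decomposition (d : ℕ) (hd : 4 ≤ d) (x y : ℝ) (hy : 0 < y) :
    -y * ((gFun d ((y : ℂ) + 2 * (π : ℂ) * (x : ℂ) * Complex.I)).re -
        (gFun d (y : ℂ)).re) = T1 d x y + T2 d x y + T3 d x y ∧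
    0 ≤ T1 d x y ∧ 0 ≤ T2 d x y ∧ 0 ≤ T3 d x y :=
  ⟨neg_mul_gFun_re_sub_eq_T_sum d x (by omega) hy, T1_nonneg d x hy, T2_nonneg d x hy,
    T3_nonneg d x hy⟩
end

section
/- Let d ≥ 4 be an even integer, and let x, y be real numbers with (d+4)/(2(d+5)) ≤ x ≤ 1/2 and 0 < y ≤ π. Then T3(x,y) ≥ 2π (1 − cos(2π/(d+5))) (e^{(2d+4)π} + e^{(d+5)π}) / ((e^{(d+3)π} − 1)(e^{(d+3)π} + 1)^2). -/
open Real Complex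

/-- Secant (convexity) bound for the exponential: for `0 ≤ s ≤ M`,
`M * (exp (c s) - 1) ≤ s * (exp (c M) - 1)`. -/
lemma exp_secant (c s M : ℝ) (hM : 0 < M) (hs : 0 ≤ s) (hsM : s ≤ M) :
    M * (Real.exp (c * s) - 1) ≤ s * (Real.exp (c * M) - 1) := by
  have h1 : 0 ≤ s / M := by positivity
  have h2 : 0 ≤ 1 - s / M := by
    have := (div_le_one hM).mpr hsM; linarith
  have hc := convexOn_exp.2 (Set.mem_univ (0:ℝ)) (Set.mem_univ (c*M)) h2 h1 (by ring)
  simp only [smul_eq_mul, mul_zero, Real.exp_zero, mul_one, zero_add] at hc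
  have he : (s / M) * (c * M) = c * s := by field_simp
  rw [he] at hc
  have h3 := mul_le_mul_of_nonneg_left hc hM.le
  have h4 : M * (1 - s / M + s / M * Real.exp (c * M)) = M - s + s * Real.exp (c * M) := by
    field_simp
  rw [h4] at h3
  nlinarith [h3]

set_option maxHeartbeats 1000000 in
/-- For even d ≥ 4, (d+4)/(2(d+5)) ≤ x ≤ 1/2 and 0 < y ≤ π,
T3(x,y) is bounded below by the stated explicit constant. -/
theorem T3_lower_bound (d : ℕ) (hd : 4 ≤ d) (hde : Even d) (x y : ℝ)
    (hx1 : ((d : ℝ) + 4) / (2 * ((d : ℝ) + 5)) ≤ x) (hx2 : x ≤ 1 / 2)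
    (hy1 : 0 < y) (hy2 : y ≤ π) :
    2 * π * (1 - Real.cos (2 * π / ((d : ℝ) + 5))) *
        (Real.exp ((2 * (d : ℝ) + 4) * π) + Real.exp (((d : ℝ) + 5) * π)) /
        ((Real.exp (((d : ℝ) + 3) * π) - 1) * (Real.exp (((d : ℝ) + 3) * π) + 1) ^ 2) ≤
      T3 d x y := by
  have hπ : (0:ℝ) < π := Real.pi_pos
  have hπ1 : (1:ℝ) ≤ π := by linarith [Real.pi_gt_three]
  have hd4 : (4:ℝ) ≤ (d:ℝ) := by exact_mod_cast hd
  simp only [T3, Dden]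
  set a : ℝ := (d:ℝ) + 3 with ha
  have ha7 : (7:ℝ) ≤ a := by rw [ha]; linarith
  have hd5 : (0:ℝ) < (d:ℝ) + 5 := by linarith
  -- abbreviations
  set c0 := Real.cos (2 * π / ((d:ℝ) + 5)) with hc0
  set cθ := Real.cos (2 * π * a * x) with hcθ
  set Ey := Real.exp (a * y) with hEy
  set Eπ := Real.exp (a * π) with hEπ
  set Ny := Real.exp ((2*(d:ℝ)+4) * y) + Real.exp (((d:ℝ)+5) * y) with hNy
  set Nπ := Real.exp ((2*(d:ℝ)+4) * π) + Real.exp (((d:ℝ)+5) * π) with hNπ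
  have hEy1 : 1 < Ey := by
    rw [hEy]; exact Real.one_lt_exp_iff.mpr (by nlinarith)
  have hEπ1 : 1 < Eπ := by
    rw [hEπ]; exact Real.one_lt_exp_iff.mpr (by nlinarith)
  have hEypos : (0:ℝ) < Ey := by linarith
  have hEπpos : (0:ℝ) < Eπ := by linarith
  have hNypos : (0:ℝ) < Ny := by rw [hNy]; positivity
  have hNπpos : (0:ℝ) < Nπ := by rw [hNπ]; positivity
  -- Step 1 : the cosine bound
  obtain ⟨k, hk⟩ := hde
  have hx1' : (d:ℝ) + 4 ≤ x * (2 * ((d:ℝ) + 5)) := (div_le_iff₀ (by positivity)).mp hx1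
  have hr1 : 2 / ((d:ℝ)+5) ≤ 2*a*x - ((d:ℝ)+2) := by
    rw [div_le_iff₀ hd5]
    nlinarith [hx1']
  have hr2 : 2*a*x - ((d:ℝ)+2) ≤ 1 := by nlinarith [hx2]
  have hcos : cθ ≤ c0 := by
    have hdk : (d:ℝ) = (k:ℝ) + (k:ℝ) := by exact_mod_cast congrArg (Nat.cast (R := ℝ)) hk
    have hshift : cθ = Real.cos (π * (2*a*x - ((d:ℝ)+2))) := by
      rw [hcθ]
      have harg : 2 * π * a * x = π * (2*a*x - ((d:ℝ)+2)) + (((k : ℤ) + 1 : ℤ) : ℝ) * (2 * π) := by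
        rw [ha, hdk]; push_cast; ring
      rw [harg, Real.cos_add_int_mul_two_pi]
    rw [hshift, hc0, show 2*π/((d:ℝ)+5) = π * (2/((d:ℝ)+5)) by ring]
    apply Real.cos_le_cos_of_nonneg_of_le_pi
    · positivity
    · nlinarith [mul_le_mul_of_nonneg_left hr2 hπ.le]
    · exact mul_le_mul_of_nonneg_left hr1 hπ.le
  have hc0le1 : c0 ≤ 1 := by rw [hc0]; exact Real.cos_le_one _
  have hcθle1 : cθ ≤ 1 := le_trans hcos hc0le1
  have hcθge : (-1:ℝ) ≤ cθ := by rw [hcθ]; exact Real.neg_one_le_cos _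
  -- Step 2 : secant bound for the first factor
  have h3 : π * (Ey - 1) ≤ y * (Eπ - 1) := by
    rw [hEy, hEπ]; exact exp_secant a y π hπ hy1.le hy2
  -- Step 3 : the second-factor bound
  set s : ℝ := π - y with hsdef
  have hs0 : 0 ≤ s := by rw [hsdef]; linarith
  have hsπ : s ≤ π := by rw [hsdef]; linarith
  have hES := Real.exp_pos s
  have hES1 : 1 ≤ Real.exp s := Real.one_le_exp hs0
  have hcore : Real.exp (a*s) - 1 ≤ Eπ * (Real.exp s - 1) := by
    have q := exp_secant a s π hπ hs0 hsπ
    rw [← hEπ] at q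
    have q2 : s ≤ Real.exp s - 1 := by linarith [Real.add_one_le_exp s]
    have hEas : 1 ≤ Real.exp (a*s) := Real.one_le_exp (by nlinarith)
    nlinarith [q, mul_nonneg (by linarith : (0:ℝ) ≤ π - 1) (by linarith : (0:ℝ) ≤ Real.exp (a*s) - 1),
      mul_nonneg (by linarith : (0:ℝ) ≤ Real.exp s - 1 - s) (by linarith : (0:ℝ) ≤ Eπ - 1),
      (by linarith : (0:ℝ) ≤ Real.exp s - 1)]
  have hEsum : Ey * Real.exp (a*s) = Eπ := by
    rw [hEy, hEπ, ← Real.exp_add]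
    congr 1
    rw [hsdef]; ring
  have hL3 : Eπ * (Ey + 1) ≤ Real.exp s * Ey * (Eπ + 1) := by
    have hm := mul_le_mul_of_nonneg_left hcore hEypos.le
    nlinarith [hm, hEsum, mul_nonneg (by linarith : (0:ℝ) ≤ Real.exp s - 1) hEypos.le]
  have hsq : (Eπ * (Ey + 1))^2 ≤ (Real.exp s * Ey * (Eπ + 1))^2 :=
    pow_le_pow_left₀ (by positivity) hL3 2
  -- the term-wise exponent comparison
  have hsq2 : (Real.exp s * Ey)^2 = Real.exp (2*s + 2*(a*y)) := by
    rw [hEy, ← Real.exp_add, sq, ← Real.exp_add]; congr 1; ring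
  have hEπ2 : Eπ^2 = Real.exp (2*(a*π)) := by
    rw [hEπ, sq, ← Real.exp_add]; congr 1; ring
  have e1 : Real.exp ((2*(d:ℝ)+4)*π) * (Real.exp s * Ey)^2
      = Real.exp ((2*(d:ℝ)+4)*y) * Eπ^2 := by
    rw [hsq2, hEπ2, ← Real.exp_add, ← Real.exp_add]
    congr 1
    rw [hsdef, ha]; ring
  have e2 : Real.exp (((d:ℝ)+5)*π) * (Real.exp s * Ey)^2
      ≤ Real.exp (((d:ℝ)+5)*y) * Eπ^2 := by
    rw [hsq2, hEπ2, ← Real.exp_add, ← Real.exp_add]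
    apply Real.exp_le_exp.mpr
    rw [hsdef, ha]
    nlinarith [hy2, hd4]
  have h4core : Nπ * (Real.exp s * Ey)^2 ≤ Ny * Eπ^2 := by
    have expand1 : Nπ * (Real.exp s * Ey)^2
        = Real.exp ((2*(d:ℝ)+4)*π) * (Real.exp s * Ey)^2
          + Real.exp (((d:ℝ)+5)*π) * (Real.exp s * Ey)^2 := by rw [hNπ]; ring
    have expand2 : Ny * Eπ^2
        = Real.exp ((2*(d:ℝ)+4)*y) * Eπ^2 + Real.exp (((d:ℝ)+5)*y) * Eπ^2 := by
      rw [hNy]; ring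
    linarith [e1.le, e2]
  have h4 : Nπ * (Ey + 1)^2 ≤ Ny * (Eπ + 1)^2 := by
    have hA := mul_le_mul_of_nonneg_left hsq hNπpos.le
    have hB := mul_le_mul_of_nonneg_right h4core (by positivity : (0:ℝ) ≤ (Eπ + 1)^2)
    have hEπ2pos : (0:ℝ) < Eπ^2 := by positivity
    have hA' : Nπ * (Ey + 1)^2 * Eπ^2 ≤ Nπ * (Real.exp s * Ey * (Eπ + 1))^2 := by
      linarith [hA]
    have hB' : Nπ * (Real.exp s * Ey * (Eπ + 1))^2 ≤ Ny * (Eπ + 1)^2 * Eπ^2 := by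
      linarith [hB]
    have hmain : Nπ * (Ey + 1)^2 * Eπ^2 ≤ Ny * (Eπ + 1)^2 * Eπ^2 := le_trans hA' hB' 
    exact le_of_mul_le_mul_right hmain hEπ2pos
  -- combine
  have hprod : (π * (Ey - 1)) * (Nπ * (Ey + 1)^2) ≤ (y * (Eπ - 1)) * (Ny * (Eπ + 1)^2) := by
    apply mul_le_mul h3 h4 (by positivity) (mul_nonneg hy1.le (by linarith))
  have hden1 : (0:ℝ) < (Eπ - 1) * (Eπ + 1)^2 := by
    apply mul_pos (by linarith) (by positivity)
  have hden2 : (0:ℝ) < (Ey - 1) * (Ey + 1)^2 := by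
    apply mul_pos (by linarith) (by positivity)
  have step1 : 2 * π * (1 - c0) * Nπ / ((Eπ - 1) * (Eπ + 1)^2)
      ≤ 2 * (1 - c0) * Ny * y / ((Ey - 1) * (Ey + 1)^2) := by
    rw [div_le_div_iff₀ hden1 hden2]
    have key := mul_le_mul_of_nonneg_left hprod (by linarith : (0:ℝ) ≤ 2 * (1 - c0))
    linarith [key]
  have hE2 : Real.exp (2*a*y) = Ey * Ey := by
    rw [hEy, ← Real.exp_add]; congr 1; ring
  clear_value a c0 cθ Ey Eπ Ny Nπ s
  have hquad_pos : (0:ℝ) < Real.exp (2*a*y) - 2 * Ey * cθ + 1 := by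
    have t1 : 0 ≤ (1 - cθ) * Ey := mul_nonneg (by linarith) hEypos.le
    have t2 : 0 < (Ey - 1) * (Ey - 1) := mul_pos (by linarith) (by linarith)
    linarith only [hE2.le, hE2.ge, t1, t2]
  have hquad_le : Real.exp (2*a*y) - 2 * Ey * cθ + 1 ≤ (Ey + 1)^2 := by
    have t3 : 0 ≤ (1 + cθ) * Ey := mul_nonneg (by linarith) hEypos.le
    linarith only [hE2.le, hE2.ge, t3]
  have hfront : (0:ℝ) < (Ey - 1) / y := div_pos (by linarith) hy1
  have mideq : 2 * (1 - c0) * Ny * y / ((Ey - 1) * (Ey + 1)^2)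
      = 2 * (1 - c0) * Ny / (((Ey - 1) / y) * (Ey + 1)^2) := by
    rw [div_mul_eq_mul_div, div_div_eq_mul_div]
  have step3 : 2 * (1 - c0) * Ny / (((Ey - 1) / y) * (Ey + 1)^2)
      ≤ 2 * (1 - cθ) * Ny / (((Ey - 1) / y) * (Real.exp (2*a*y) - 2 * Ey * cθ + 1)) := by
    apply div_le_div₀
    · have : (0:ℝ) ≤ 1 - cθ := by linarith
      positivity
    · have h' : 2 * (1 - c0) ≤ 2 * (1 - cθ) := by linarith
      exact mul_le_mul_of_nonneg_right h' hNypos.le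
    · exact mul_pos hfront hquad_pos
    · exact mul_le_mul_of_nonneg_left hquad_le hfront.le
  calc 2 * π * (1 - c0) * Nπ / ((Eπ - 1) * (Eπ + 1)^2)
      ≤ 2 * (1 - c0) * Ny * y / ((Ey - 1) * (Ey + 1)^2) := step1
    _ = 2 * (1 - c0) * Ny / (((Ey - 1) / y) * (Ey + 1)^2) := mideq
    _ ≤ 2 * (1 - cθ) * Ny / (((Ey - 1) / y) * (Real.exp (2*a*y) - 2 * Ey * cθ + 1)) := step3
end

section
/- For every integer d with 4 ≤ d ≤ 61, A_d > π^2 / (3(d+3)); equivalently, 2√(A_d) > 2π/√(3(d+3)), so the exponential main term 2√(A_d n) for q_d^{(2)}(n) dominates the exponential main term 2π√n/√(3(d+3)) for Q_d^{(2)}(n). -/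
open Real

/-!
Put `t = 1 - α = α ^ d`. Then `-log α = -log (1 - t) ≥ t + t²/2` and the series is
`Li₂ t ≥ t + t²/4`, so `A_d ≥ truncatedA d t`, which is increasing in `d` and in `t`.
Since `x ↦ (1 - x) ^ d - x` is decreasing, `s ≤ (1 - s) ^ d` gives the lower bound `s ≤ t`.
For `d ≥ 13` take `s = 2 / (d + 2)`: then `(1 + 2/d) ^ d ≤ e² < (d + 2) / 2`, and the
terms `d s²/2 + s` of `truncatedA d s` already give `4 (d + 1) / (d + 2)² > π² / (3 (d + 3))`.
For `4 ≤ d ≤ 12` a rational `s`, checked at the endpoints of a few ranges of `d`, suffices.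
-/

theorem add_sq_div_two_le_neg_log_one_sub {t : ℝ} (h0 : 0 ≤ t) (h1 : t < 1) :
    t + t ^ 2 / 2 ≤ -log (1 - t) := by
  have hlog := hasSum_pow_div_log_of_abs_lt_one (abs_lt.mpr ⟨by linarith, h1⟩)
  have := sum_le_hasSum (Finset.range 2) (fun i _ => by positivity) hlog
  norm_num [Finset.sum_range_succ] at this
  linarith

theorem add_sq_div_four_le_tsum_pow_div_sq {t : ℝ} (h0 : 0 ≤ t) (h1 : t < 1) :
    t + t ^ 2 / 4 ≤ ∑' r : ℕ, t ^ (r + 1) / ((r : ℝ) + 1) ^ 2 := by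
  have hsum : Summable fun r : ℕ => t ^ (r + 1) / ((r : ℝ) + 1) ^ 2 := by
    refine .of_nonneg_of_le (fun r => by positivity) (fun r => ?_)
      ((summable_geometric_of_lt_one h0 h1).mul_left t)
    rw [pow_succ']
    exact div_le_self (by positivity) (one_le_pow₀ (by linarith [r.cast_nonneg (α := ℝ)]))
  have := hsum.sum_le_tsum (Finset.range 2) (fun i _ => by positivity)
  norm_num [Finset.sum_range_succ] at this
  linarith

theorem le_one_sub_of_le_one_sub_pow {d d₂ : ℕ} {α s : ℝ} (hα : 0 < α) (hroot : α ^ d + α = 1)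
    (hd : d ≤ d₂) (hs0 : 0 ≤ s) (hs1 : s ≤ 1) (hs : s ≤ (1 - s) ^ d₂) : s ≤ 1 - α := by
  have hd0 : d ≠ 0 := by rintro rfl; simp at hroot; linarith
  by_contra! h
  have : (1 - s) ^ d < α ^ d := pow_lt_pow_left₀ (by linarith) (by linarith) hd0
  have := pow_le_pow_of_le_one (by linarith) (by linarith) hd (a := 1 - s)
  linarith

noncomputable def truncatedA (d : ℕ) (s : ℝ) : ℝ :=
  d / 2 * (s + s ^ 2 / 2) ^ 2 + (s + s ^ 2 / 4)

theorem truncatedA_le {d d₁ : ℕ} {α s : ℝ} (hα : 0 < α) (hroot : α ^ d + α = 1)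
    (hd : d₁ ≤ d) (hs0 : 0 ≤ s) (hs : s ≤ 1 - α) :
    truncatedA d₁ s ≤ d / 2 * log α ^ 2 + ∑' r : ℕ, α ^ ((r + 1) * d) / ((r : ℝ) + 1) ^ 2 := by
  have hα1 : α < 1 := by nlinarith [pow_pos hα d]
  have hlog := add_sq_div_two_le_neg_log_one_sub (t := 1 - α) (by linarith) (by linarith)
  have hLi := add_sq_div_four_le_tsum_pow_div_sq (t := 1 - α) (by linarith) (by linarith)
  rw [sub_sub_cancel] at hlog
  have hterm : ∀ r : ℕ, α ^ ((r + 1) * d) = (1 - α) ^ (r + 1) := fun r => by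
    rw [pow_mul', ← hroot, add_sub_cancel_right]
  simp only [hterm]
  unfold truncatedA
  have h1 : s + s ^ 2 / 2 ≤ -log α := by nlinarith
  have h2 : s + s ^ 2 / 4 ≤ (1 - α) + (1 - α) ^ 2 / 4 := by gcongr
  have h3 : (d₁ : ℝ) / 2 * (s + s ^ 2 / 2) ^ 2 ≤ d / 2 * log α ^ 2 := by
    rw [← neg_sq (log α)]
    gcongr
  linarith

theorem two_div_le_one_sub_two_div_pow {d : ℕ} (hd : 13 ≤ d) :
    2 / ((d : ℝ) + 2) ≤ (1 - 2 / ((d : ℝ) + 2)) ^ d := by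
  have hd' : (13 : ℝ) ≤ d := by exact_mod_cast hd
  have hexp : (1 + 2 / (d : ℝ)) ^ d ≤ exp 2 := by
    simpa [sub_eq_add_neg, neg_div] using
      one_sub_div_pow_le_exp_neg (n := d) (t := -2) (by linarith)
  have he : exp 2 < 7.5 := by
    have := exp_one_lt_d9
    rw [show (2 : ℝ) = 1 + 1 by norm_num, exp_add]
    nlinarith [exp_pos 1]
  have hinv : 1 - 2 / ((d : ℝ) + 2) = (1 + 2 / (d : ℝ))⁻¹ := by
    field_simp
    ring
  rw [hinv, inv_pow, div_le_iff₀ (by positivity), mul_comm, ← div_eq_mul_inv,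
    le_div_iff₀ (by positivity)]
  linarith

theorem pi_sq_lt_three_mul_truncatedA_two_div {d : ℕ} (hd : 1 ≤ d) :
    π ^ 2 < 3 * ((d : ℝ) + 3) * truncatedA d (2 / ((d : ℝ) + 2)) := by
  set s := 2 / ((d : ℝ) + 2) with hs
  have hd' : (1 : ℝ) ≤ d := by exact_mod_cast hd
  have hπ : π ^ 2 < 10 := by nlinarith [pi_lt_d2, pi_pos]
  have hquad : 10 ≤ 3 * ((d : ℝ) + 3) * (d / 2 * s ^ 2 + s) := by
    rw [hs, div_pow, ← sub_nonneg]
    field_simp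
    ring_nf
    nlinarith
  have hmono : d / 2 * s ^ 2 + s ≤ truncatedA d s := by
    unfold truncatedA
    gcongr
    · exact le_add_of_nonneg_right (by positivity)
    · exact le_add_of_nonneg_right (by positivity)
  nlinarith

theorem pi_sq_div_lt_of_le_one_sub_pow {d d₁ d₂ : ℕ} {α s : ℝ} (hα : 0 < α)
    (hroot : α ^ d + α = 1) (hd₁ : d₁ ≤ d) (hd₂ : d ≤ d₂) (hs0 : 0 ≤ s) (hs1 : s ≤ 1)
    (hs : s ≤ (1 - s) ^ d₂) (hπ : π ^ 2 < 3 * ((d₁ : ℝ) + 3) * truncatedA d₁ s) :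
    π ^ 2 / (3 * ((d : ℝ) + 3)) <
      d / 2 * log α ^ 2 + ∑' r : ℕ, α ^ ((r + 1) * d) / ((r : ℝ) + 1) ^ 2 := by
  have hA := truncatedA_le hα hroot hd₁ hs0
    (le_one_sub_of_le_one_sub_pow hα hroot hd₂ hs0 hs1 hs)
  have hd₁' : (d₁ : ℝ) ≤ d := by exact_mod_cast hd₁
  have hT : 0 ≤ truncatedA d₁ s := by unfold truncatedA; positivity
  rw [div_lt_iff₀ (by positivity)]
  nlinarith

theorem A_d_dominates_general (d : ℕ) (hd4 : 4 ≤ d) (α A : ℝ)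
    (hα : 0 < α ∧ α < 1 ∧ α ^ d + α = 1)
    (hA : A = (d : ℝ) / 2 * (Real.log α) ^ 2 +
      ∑' r : ℕ, α ^ ((r + 1) * d) / ((r : ℝ) + 1) ^ 2) :
    π ^ 2 / (3 * ((d : ℝ) + 3)) < A := by
  obtain ⟨hα0, -, hroot⟩ := hα
  subst hA
  have hπ : π ^ 2 < 9.87 := by nlinarith [pi_lt_d4, pi_pos]
  have cert (d₁ d₂ : ℕ) (s : ℝ) (hd₁ : d₁ ≤ d) (hd₂ : d ≤ d₂)
      (hs : 0 ≤ s ∧ s ≤ 1 ∧ s ≤ (1 - s) ^ d₂ ∧ 9.87 < 3 * ((d₁ : ℝ) + 3) * truncatedA d₁ s) :=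
    pi_sq_div_lt_of_le_one_sub_pow hα0 hroot hd₁ hd₂ hs.1 hs.2.1 hs.2.2.1 (hπ.trans hs.2.2.2)
  rcases (by omega : d ≤ 7 ∨ 8 ≤ d ∧ d ≤ 9 ∨ 10 ≤ d ∧ d ≤ 12 ∨ 13 ≤ d)
    with hd | ⟨hd₁, hd₂⟩ | ⟨hd₁, hd₂⟩ | hd
  · interval_cases d
    · exact cert 4 4 (11 / 40) le_rfl le_rfl (by norm_num [truncatedA])
    · exact cert 5 5 (6 / 25) le_rfl le_rfl (by norm_num [truncatedA])
    · exact cert 6 6 (11 / 50) le_rfl le_rfl (by norm_num [truncatedA])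
    · exact cert 7 7 (1 / 5) le_rfl le_rfl (by norm_num [truncatedA])
  · exact cert 8 9 (7 / 40) hd₁ hd₂ (by norm_num [truncatedA])
  · exact cert 10 12 (7 / 50) hd₁ hd₂ (by norm_num [truncatedA])
  · have hs : 2 / ((d : ℝ) + 2) ≤ 1 := by rw [div_le_one (by positivity)]; linarith
    exact pi_sq_div_lt_of_le_one_sub_pow hα0 hroot le_rfl le_rfl (by positivity) hs
      (two_div_le_one_sub_two_div_pow hd) (pi_sq_lt_three_mul_truncatedA_two_div (by omega))

/-- For every integer d with 4 ≤ d ≤ 61, A_d > π²/(3(d+3)). -/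
theorem A_d_dominates (d : ℕ) (hd4 : 4 ≤ d) (hd61 : d ≤ 61) (α A : ℝ)
    (hα : 0 < α ∧ α < 1 ∧ α ^ d + α = 1)
    (hA : A = (d : ℝ) / 2 * (Real.log α) ^ 2 +
      ∑' r : ℕ, α ^ ((r + 1) * d) / ((r : ℝ) + 1) ^ 2) :
    π ^ 2 / (3 * ((d : ℝ) + 3)) < A :=
  A_d_dominates_general d hd4 α A hα hA
end
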